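/- arXiv:1408.0018 — 2 statements merged into one kernel-verified Lean document; each statement's English description precedes it below -/
import Mathlib

section
/- Let k be a field, R a commutative k-algebra, and L a Lie algebra over k which is also an R-module; suppose given a map a assigning to each X ∈ L a k-linear map a(X) : R → R such that [X, f • Y] = f • [X, Y] + (a(X) f) • Y for all X, Y ∈ L and f ∈ R. Let K : L → L be an R-linear bijection with inverse K⁻¹, and define B(X,Y) := [X,Y]_K + K⁻¹ (T_K(X,Y)). Then B satisfies the Leibniz rule with anchor K: B(X, f • Y) = f • B(X,Y) + (a(K X) f) • Y for all X, Y ∈ L and f ∈ R. -/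
/-- The Nijenhuis torsion of an endomorphism `K` of a Lie ring:
`T_K(X,Y) = [K X, K Y] − K [K X, Y] − K [X, K Y] + K (K [X, Y])`. -/
def nijenhuisTorsion {L : Type*} [LieRing L] (K : L → L) (X Y : L) : L :=
  ⁅K X, K Y⁆ - K ⁅K X, Y⁆ - K ⁅X, K Y⁆ + K (K ⁅X, Y⁆)

/-- The contracted bracket `[X,Y]_K = [K X, Y] + [X, K Y] − K [X, Y]`. -/
def contractedBracket {L : Type*} [LieRing L] (K : L → L) (X Y : L) : L :=
  ⁅K X, Y⁆ + ⁅X, K Y⁆ - K ⁅X, Y⁆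

/-- The Lie algebroid bracket `B(X,Y) = [X,Y]_K + K⁻¹(T_K(X,Y))` associated to an
invertible endomorphism `K` with inverse `Kinv`. -/
def algebroidBracket {L : Type*} [LieRing L] (K Kinv : L → L) (X Y : L) : L :=
  contractedBracket K X Y + Kinv (nijenhuisTorsion K X Y)

theorem stmt_9 {k : Type*} [Field k] {R : Type*} [CommRing R] [Algebra k R]
    {L : Type*} [LieRing L] [LieAlgebra k L] [Module R L]
    (a : L → R →ₗ[k] R)
    (hLeib : ∀ X Y : L, ∀ f : R, ⁅X, f • Y⁆ = f • ⁅X, Y⁆ + a X f • Y)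
    (K Kinv : L →ₗ[R] L)
    (hKinv₁ : Kinv ∘ₗ K = LinearMap.id) (hKinv₂ : K ∘ₗ Kinv = LinearMap.id) :
    ∀ X Y : L, ∀ f : R,
      algebroidBracket ⇑K ⇑Kinv X (f • Y) =
        f • algebroidBracket ⇑K ⇑Kinv X Y + a (K X) f • Y := by
  intro X Y f
  have hK : ∀ z : L, Kinv (K z) = z := fun z => congrFun (congrArg DFunLike.coe hKinv₁) z
  simp only [algebroidBracket, contractedBracket, nijenhuisTorsion, map_smul, hLeib,
    map_add, map_sub, map_neg, smul_add, smul_sub, hK]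
  abel
end

section
/- Let L be a Lie algebra over a commutative ring and let K : L → L be a linear map whose Nijenhuis torsion vanishes, T_K = 0. Then the contracted bracket [X,Y]_K := [K X, Y] + [X, K Y] − K [X, Y] is antisymmetric, satisfies the Jacobi identity [X,[Y,Z]_K]_K + [Y,[Z,X]_K]_K + [Z,[X,Y]_K]_K = 0 for all X, Y, Z ∈ L, and K is a morphism of brackets: K ([X,Y]_K) = [K X, K Y] for all X, Y ∈ L. -/
theorem stmt_11 {R : Type*} [CommRing R] {L : Type*} [LieRing L] [LieAlgebra R L]
    (K : L →ₗ[R] L) (hT : ∀ X Y : L, nijenhuisTorsion ⇑K X Y = 0) :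
    (∀ X Y : L, contractedBracket ⇑K X Y = -contractedBracket ⇑K Y X) ∧
    (∀ X Y Z : L,
      contractedBracket ⇑K X (contractedBracket ⇑K Y Z) +
        contractedBracket ⇑K Y (contractedBracket ⇑K Z X) +
        contractedBracket ⇑K Z (contractedBracket ⇑K X Y) = 0) ∧
    (∀ X Y : L, K (contractedBracket ⇑K X Y) = ⁅K X, K Y⁆) := by
  -- The morphism property: K [X,Y]_K = [K X, K Y], a rearrangement of T_K = 0.
  have hmor : ∀ X Y : L, K (contractedBracket ⇑K X Y) = ⁅K X, K Y⁆ := by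
    intro X Y
    have h := hT X Y
    rw [nijenhuisTorsion] at h
    rw [sub_eq_zero.symm, contractedBracket, map_sub, map_add,
      show K ⁅K X, Y⁆ + K ⁅X, K Y⁆ - K (K ⁅X, Y⁆) - ⁅K X, K Y⁆ =
        -(⁅K X, K Y⁆ - K ⁅K X, Y⁆ - K ⁅X, K Y⁆ + K (K ⁅X, Y⁆)) from by abel,
      h, neg_zero]
  -- Key rearrangement of the torsion identity.
  have key : ∀ X W : L, K ⁅X, K W⁆ = ⁅K X, K W⁆ - K ⁅K X, W⁆ + K (K ⁅X, W⁆) := by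
    intro X W
    have h := hT X W
    rw [nijenhuisTorsion] at h
    rw [sub_eq_zero.symm,
      show K ⁅X, K W⁆ - (⁅K X, K W⁆ - K ⁅K X, W⁆ + K (K ⁅X, W⁆)) =
        -(⁅K X, K W⁆ - K ⁅K X, W⁆ - K ⁅X, K W⁆ + K (K ⁅X, W⁆)) from by abel,
      h, neg_zero]
  refine ⟨?_, ?_, hmor⟩
  · intro X Y
    rw [contractedBracket, contractedBracket, ← lie_skew (K Y) X, ← lie_skew Y (K X),
      ← lie_skew Y X, map_neg]
    abel
  · intro X Y Z
    -- Expansion of [X, [Y,Z]_K]_K into bracket atoms.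
    have expand : ∀ X Y Z : L,
        contractedBracket ⇑K X (contractedBracket ⇑K Y Z) =
        ⁅K X, ⁅K Y, Z⁆⁆ + ⁅K X, ⁅Y, K Z⁆⁆ + ⁅X, ⁅K Y, K Z⁆⁆
          - K ⁅X, ⁅K Y, Z⁆⁆ - K ⁅X, ⁅Y, K Z⁆⁆ - K ⁅K X, ⁅Y, Z⁆⁆
          + K (K ⁅X, ⁅Y, Z⁆⁆) := by
      intro X Y Z
      have h1 : contractedBracket ⇑K X (contractedBracket ⇑K Y Z) =
          ⁅K X, contractedBracket ⇑K Y Z⁆ + ⁅X, K (contractedBracket ⇑K Y Z)⁆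
            - K ⁅X, contractedBracket ⇑K Y Z⁆ := rfl
      rw [h1, hmor Y Z, contractedBracket]
      simp only [lie_sub, lie_add, map_sub, map_add]
      rw [key X ⁅Y, Z⁆]
      abel
    rw [expand X Y Z, expand Y Z X, expand Z X Y]
    -- Group into six Jacobi identities.
    have j1 := lie_jacobi (K X) (K Y) Z
    have j2 := lie_jacobi (K Y) (K Z) X
    have j3 := lie_jacobi (K Z) (K X) Y
    have j4 : K ⁅K X, ⁅Y, Z⁆⁆ + K ⁅Y, ⁅Z, K X⁆⁆ + K ⁅Z, ⁅K X, Y⁆⁆ = 0 := by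
      rw [← map_add, ← map_add, lie_jacobi, map_zero]
    have j5 : K ⁅X, ⁅K Y, Z⁆⁆ + K ⁅K Y, ⁅Z, X⁆⁆ + K ⁅Z, ⁅X, K Y⁆⁆ = 0 := by
      rw [← map_add, ← map_add, lie_jacobi, map_zero]
    have j6 : K ⁅X, ⁅Y, K Z⁆⁆ + K ⁅Y, ⁅K Z, X⁆⁆ + K ⁅K Z, ⁅X, Y⁆⁆ = 0 := by
      rw [← map_add, ← map_add, lie_jacobi, map_zero]
    have j7 : K (K ⁅X, ⁅Y, Z⁆⁆) + K (K ⁅Y, ⁅Z, X⁆⁆) + K (K ⁅Z, ⁅X, Y⁆⁆) = 0 := by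
      rw [← map_add, ← map_add, ← map_add, ← map_add, lie_jacobi, map_zero, map_zero]
    have total :
        (⁅K X, ⁅K Y, Z⁆⁆ + ⁅K X, ⁅Y, K Z⁆⁆ + ⁅X, ⁅K Y, K Z⁆⁆
          - K ⁅X, ⁅K Y, Z⁆⁆ - K ⁅X, ⁅Y, K Z⁆⁆ - K ⁅K X, ⁅Y, Z⁆⁆
          + K (K ⁅X, ⁅Y, Z⁆⁆)) +
        (⁅K Y, ⁅K Z, X⁆⁆ + ⁅K Y, ⁅Z, K X⁆⁆ + ⁅Y, ⁅K Z, K X⁆⁆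
          - K ⁅Y, ⁅K Z, X⁆⁆ - K ⁅Y, ⁅Z, K X⁆⁆ - K ⁅K Y, ⁅Z, X⁆⁆
          + K (K ⁅Y, ⁅Z, X⁆⁆)) +
        (⁅K Z, ⁅K X, Y⁆⁆ + ⁅K Z, ⁅X, K Y⁆⁆ + ⁅Z, ⁅K X, K Y⁆⁆
          - K ⁅Z, ⁅K X, Y⁆⁆ - K ⁅Z, ⁅X, K Y⁆⁆ - K ⁅K Z, ⁅X, Y⁆⁆
          + K (K ⁅Z, ⁅X, Y⁆⁆)) =
        (⁅K X, ⁅K Y, Z⁆⁆ + ⁅K Y, ⁅Z, K X⁆⁆ + ⁅Z, ⁅K X, K Y⁆⁆) +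
        (⁅K Y, ⁅K Z, X⁆⁆ + ⁅K Z, ⁅X, K Y⁆⁆ + ⁅X, ⁅K Y, K Z⁆⁆) +
        (⁅K Z, ⁅K X, Y⁆⁆ + ⁅K X, ⁅Y, K Z⁆⁆ + ⁅Y, ⁅K Z, K X⁆⁆) -
        (K ⁅K X, ⁅Y, Z⁆⁆ + K ⁅Y, ⁅Z, K X⁆⁆ + K ⁅Z, ⁅K X, Y⁆⁆) -
        (K ⁅X, ⁅K Y, Z⁆⁆ + K ⁅K Y, ⁅Z, X⁆⁆ + K ⁅Z, ⁅X, K Y⁆⁆) -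
        (K ⁅X, ⁅Y, K Z⁆⁆ + K ⁅Y, ⁅K Z, X⁆⁆ + K ⁅K Z, ⁅X, Y⁆⁆) +
        (K (K ⁅X, ⁅Y, Z⁆⁆) + K (K ⁅Y, ⁅Z, X⁆⁆) + K (K ⁅Z, ⁅X, Y⁆⁆)) := by
      abel
    rw [total, j1, j2, j3, j4, j5, j6, j7]
    abel
end
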